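/- Let 𝒳 = 𝒳₁ ∪ 𝒳₂ ⊂ ℝⁿ be disjoint finite sets, and suppose there exists an n-simplex S (convex hull of n+1 affinely independent points) with 𝒳₁ ⊂ S and 𝒳₂ ∩ S = ∅. Then there exist an invertible linear map W ∈ GL(n+1, ℝ) and b ∈ ℝ^{n+1} such that τ_{W,b}(ι(𝒳₁)) and τ_{W,b}(ι(𝒳₂)) are linearly separable in ℝ^{n+1}, where ι : ℝⁿ ↪ ℝ^{n+1} is the standard inclusion. -/

import Mathlib

noncomputable section

/-- Componentwise ReLU. -/
def relu {m : ℕ} (y : EuclideanSpace ℝ (Fin m)) : EuclideanSpace ℝ (Fin m) :=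
  WithLp.toLp 2 (fun i => max (y i) 0)

/-- Truncation map τ_{W,b}(x) = W⁺(σ(Wx + b) - b), with `Wp` playing the role of W⁺. -/
def trunc {n m : ℕ} (W : EuclideanSpace ℝ (Fin n) →ₗ[ℝ] EuclideanSpace ℝ (Fin m))
    (Wp : EuclideanSpace ℝ (Fin m) →ₗ[ℝ] EuclideanSpace ℝ (Fin n))
    (b : EuclideanSpace ℝ (Fin m)) (x : EuclideanSpace ℝ (Fin n)) :
    EuclideanSpace ℝ (Fin n) :=
  Wp (relu (W x + b) - b)

/-- Truncation map for invertible W: τ_{W,b}(x) = W⁻¹(σ(Wx + b) - b). -/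
def truncE {n : ℕ} (W : EuclideanSpace ℝ (Fin n) ≃ₗ[ℝ] EuclideanSpace ℝ (Fin n))
    (b x : EuclideanSpace ℝ (Fin n)) : EuclideanSpace ℝ (Fin n) :=
  W.symm (relu (W x + b) - b)

/-- The standard inclusion ι : ℝⁿ → ℝᵐ sending eᵢⁿ to eᵢᵐ (padding with zeros). -/
def incl (n m : ℕ) : EuclideanSpace ℝ (Fin n) →ₗ[ℝ] EuclideanSpace ℝ (Fin m) where
  toFun x := WithLp.toLp 2 (fun i => if h : (i : ℕ) < n then x ⟨i, h⟩ else 0)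
  map_add' x y := PiLp.ext fun i => by by_cases h : (i : ℕ) < n <;> simp [h]
  map_smul' c x := PiLp.ext fun i => by by_cases h : (i : ℕ) < n <;> simp [h]


/-!
Let `λ : ℝⁿ → ℝⁿ⁺¹` be the barycentric coordinates of the simplex, `b = λ(0)`, and let `W` send
`ι v` to `λ(v) - λ(0)` and the last basis vector to `b`. `W` is injective since the linear part of
`λ` lands in the hyperplane `∑ᵢ yᵢ = 0` while `∑ᵢ bᵢ = 1`. Now `W (ι x) + b = λ(x)`, so for
`u = Wᵀ 𝟙` the score `⟪u, τ_{W,b}(ι x)⟫ = ∑ᵢ (σ(λ(x)) - λ(0))ᵢ` equals `∑ᵢ λᵢ(x)⁻`: it vanishes on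
`S` and is positive off `S`, and finiteness of `𝒳₂` leaves room for a threshold.
-/

open Finset

lemma Set.Finite.exists_pos_forall_lt {α : Type*} {s : Set α} (hs : s.Finite) {f : α → ℝ}
    (hf : ∀ x ∈ s, 0 < f x) : ∃ c, 0 < c ∧ ∀ x ∈ s, c < f x := by
  rcases s.eq_empty_or_nonempty with rfl | hne
  · exact ⟨1, one_pos, by simp⟩
  obtain ⟨a, ha, hmin⟩ := Set.exists_min_image s f hs hne
  exact ⟨f a / 2, half_pos (hf a ha), fun x hx => by linarith [hmin x hx, hf a ha]⟩

section Truncation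

variable {m : ℕ}

lemma inner_adjoint_truncE (W : EuclideanSpace ℝ (Fin m) ≃ₗ[ℝ] EuclideanSpace ℝ (Fin m))
    (v b z : EuclideanSpace ℝ (Fin m)) :
    inner ℝ (LinearMap.adjoint W.toLinearMap v) (truncE W b z) =
      inner ℝ v (relu (W z + b) - b) := by
  rw [LinearMap.adjoint_inner_left, truncE, LinearEquiv.coe_coe, W.apply_symm_apply]

lemma inner_one_eq_sum (y : EuclideanSpace ℝ (Fin m)) :
    inner ℝ (WithLp.toLp 2 fun _ => (1 : ℝ)) y = ∑ i, y i := by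
  simp [PiLp.inner_apply]

lemma sum_relu_sub_eq_sum_negPart {y c : EuclideanSpace ℝ (Fin m)} (h : ∑ i, y i = ∑ i, c i) :
    ∑ i, (relu y - c) i = ∑ i, (y i)⁻ := by
  have hpos : ∀ i, relu y i = (y i)⁺ := fun _ => rfl
  simp only [PiLp.sub_apply, hpos]
  rw [sum_sub_distrib, ← h, ← sum_sub_distrib]
  exact sum_congr rfl fun i _ => by linarith [posPart_sub_negPart (y i)]

end Truncation

def dropLast (n : ℕ) : EuclideanSpace ℝ (Fin (n + 1)) →ₗ[ℝ] EuclideanSpace ℝ (Fin n) where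
  toFun z := WithLp.toLp 2 fun j => z j.castSucc
  map_add' _ _ := rfl
  map_smul' _ _ := rfl

@[simp] lemma dropLast_apply {n : ℕ} (z : EuclideanSpace ℝ (Fin (n + 1))) (j : Fin n) :
    dropLast n z j = z j.castSucc := rfl

@[simp] lemma dropLast_incl {n : ℕ} (x : EuclideanSpace ℝ (Fin n)) :
    dropLast n (incl n (n + 1) x) = x := by
  ext j; simp [incl]

@[simp] lemma incl_apply_last {n : ℕ} (x : EuclideanSpace ℝ (Fin n)) :
    incl n (n + 1) x (Fin.last n) = 0 := by
  simp [incl]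

lemma eq_zero_of_dropLast_eq_zero {n : ℕ} {z : EuclideanSpace ℝ (Fin (n + 1))}
    (h : dropLast n z = 0) (hlast : z (Fin.last n) = 0) : z = 0 := by
  ext i
  induction i using Fin.lastCases with
  | last => exact hlast
  | cast j => simpa using congrArg (· j) h

namespace AffineBasis

variable {ι k E : Type*}

section Ring

variable [Ring k] [AddCommGroup E] [Module k E] (B : AffineBasis ι k E)

lemma coord_eq_linear_add_coord_zero (i : ι) (v : E) :
    B.coord i v = (B.coord i).linear v + B.coord i 0 := by
  simpa using (B.coord i).map_vadd 0 v

lemma sum_coord_linear_eq_zero [Fintype ι] (v : E) :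
    ∑ i, (B.coord i).linear v = 0 := by
  have := B.sum_coord_apply_eq_one v
  rwa [sum_congr rfl fun i _ => B.coord_eq_linear_add_coord_zero i v, sum_add_distrib,
    B.sum_coord_apply_eq_one, add_eq_right] at this

end Ring

section OrderedField

variable [Fintype ι] [Field k] [LinearOrder k] [IsStrictOrderedRing k] [AddCommGroup E]
  [Module k E] (B : AffineBasis ι k E)

lemma sum_negPart_coord_eq_zero_iff (x : E) :
    ∑ i, (B.coord i x)⁻ = 0 ↔ x ∈ convexHull k (Set.range B) := by
  simp [sum_eq_zero_iff_of_nonneg, B.convexHull_eq_nonneg_coord]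

lemma sum_negPart_coord_pos_iff (x : E) :
    0 < ∑ i, (B.coord i x)⁻ ↔ x ∉ convexHull k (Set.range B) := by
  rw [← B.sum_negPart_coord_eq_zero_iff, (sum_nonneg fun i _ => negPart_nonneg _).lt_iff_ne']

end OrderedField

variable {n : ℕ} (B : AffineBasis (Fin (n + 1)) ℝ (EuclideanSpace ℝ (Fin n)))

/-- The homogenised barycentric coordinates: `(v, t) ↦ λ.linear v + t λ(0)`, which is
`t λ(v / t)` for `t ≠ 0`. -/
def homCoord : EuclideanSpace ℝ (Fin (n + 1)) →ₗ[ℝ] EuclideanSpace ℝ (Fin (n + 1)) where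
  toFun z := WithLp.toLp 2 fun i =>
    (B.coord i).linear (dropLast n z) + z (Fin.last n) * B.coord i 0
  map_add' z w := by ext i; simp only [map_add, PiLp.add_apply]; ring
  map_smul' c z := by
    ext i; simp only [map_smul, PiLp.smul_apply, smul_eq_mul, RingHom.id_apply]; ring

lemma homCoord_apply (z : EuclideanSpace ℝ (Fin (n + 1))) (i : Fin (n + 1)) :
    B.homCoord z i = (B.coord i).linear (dropLast n z) + z (Fin.last n) * B.coord i 0 := rfl

lemma homCoord_incl_add_coords_zero (x : EuclideanSpace ℝ (Fin n)) :
    B.homCoord (incl n (n + 1) x) + WithLp.toLp 2 (B.coords 0) = WithLp.toLp 2 (B.coords x) := by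
  ext i
  simp [homCoord_apply, B.coord_eq_linear_add_coord_zero i x]

lemma injective_homCoord : Function.Injective B.homCoord := by
  refine (injective_iff_map_eq_zero _).2 fun z hz => ?_
  have hz' : ∀ i, (B.coord i).linear (dropLast n z) + z (Fin.last n) * B.coord i 0 = 0 :=
    fun i => congrArg (· i) hz
  have hlast : z (Fin.last n) = 0 := by
    have hsum := sum_congr rfl fun i (_ : i ∈ univ) => hz' i
    rwa [sum_add_distrib, sum_coord_linear_eq_zero, ← mul_sum, B.sum_coord_apply_eq_one,
      sum_const_zero, zero_add, mul_one] at hsum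
  have hdrop : dropLast n z = 0 := B.ext_elem fun i => by
    have hlin := hz' i
    rw [hlast, zero_mul, add_zero] at hlin
    rw [B.coord_eq_linear_add_coord_zero i, hlin, zero_add]
  exact eq_zero_of_dropLast_eq_zero hdrop hlast

def homCoordEquiv : EuclideanSpace ℝ (Fin (n + 1)) ≃ₗ[ℝ] EuclideanSpace ℝ (Fin (n + 1)) :=
  LinearEquiv.ofInjectiveEndo B.homCoord B.injective_homCoord

lemma homCoordEquiv_apply (z : EuclideanSpace ℝ (Fin (n + 1))) :
    B.homCoordEquiv z = B.homCoord z := rfl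

lemma inner_truncE_homCoordEquiv_incl (x : EuclideanSpace ℝ (Fin n)) :
    inner ℝ (LinearMap.adjoint B.homCoordEquiv.toLinearMap (WithLp.toLp 2 fun _ => 1))
      (truncE B.homCoordEquiv (WithLp.toLp 2 (B.coords 0)) (incl n (n + 1) x)) =
      ∑ i, (B.coord i x)⁻ := by
  rw [inner_adjoint_truncE, inner_one_eq_sum, homCoordEquiv_apply, homCoord_incl_add_coords_zero,
    sum_relu_sub_eq_sum_negPart] <;> simp [coords_apply]

end AffineBasis

theorem trunc_separates_simplex_data_general {n : ℕ}
    (X₁ X₂ : Set (EuclideanSpace ℝ (Fin n)))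
    (hX₂ : X₂.Finite)
    (s : Fin (n + 1) → EuclideanSpace ℝ (Fin n))
    (hs : AffineIndependent ℝ s)
    (S : Set (EuclideanSpace ℝ (Fin n)))
    (hS : S = convexHull ℝ (Set.range s))
    (hX₁S : X₁ ⊆ S) (hX₂S : X₂ ∩ S = ∅) :
    ∃ (W : EuclideanSpace ℝ (Fin (n + 1)) ≃ₗ[ℝ] EuclideanSpace ℝ (Fin (n + 1)))
      (b : EuclideanSpace ℝ (Fin (n + 1)))
      (u : EuclideanSpace ℝ (Fin (n + 1))) (c : ℝ),
      (∀ x ∈ X₁, (inner ℝ u (truncE W b (incl n (n + 1) x)) : ℝ) < c) ∧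
      (∀ x ∈ X₂, c < (inner ℝ u (truncE W b (incl n (n + 1) x)) : ℝ)) := by
  let B : AffineBasis (Fin (n + 1)) ℝ (EuclideanSpace ℝ (Fin n)) :=
    ⟨s, hs, hs.affineSpan_eq_top_iff_card_eq_finrank_add_one.2 (by simp)⟩
  have hB : S = convexHull ℝ (Set.range B) := hS
  obtain ⟨c, hc, hcX₂⟩ := hX₂.exists_pos_forall_lt (f := fun x => ∑ i, (B.coord i x)⁻)
    fun x hx => (B.sum_negPart_coord_pos_iff x).2 fun hxS => hX₂S.subset ⟨hx, hB ▸ hxS⟩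
  refine ⟨B.homCoordEquiv, WithLp.toLp 2 (B.coords 0),
    LinearMap.adjoint B.homCoordEquiv.toLinearMap (WithLp.toLp 2 fun _ => 1), c,
    fun x hx => ?_, fun x hx => ?_⟩ <;> rw [B.inner_truncE_homCoordEquiv_incl]
  · rwa [(B.sum_negPart_coord_eq_zero_iff x).2 (hB ▸ hX₁S hx)]
  · exact hcX₂ x hx

/-- concentric-type data separated by a simplex becomes linearly separable
after inclusion into ℝ^{n+1} and one truncation map. -/
theorem trunc_separates_simplex_data {n : ℕ}
    (X₁ X₂ : Set (EuclideanSpace ℝ (Fin n)))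
    (hX₁ : X₁.Finite) (hX₂ : X₂.Finite) (hdisj : Disjoint X₁ X₂)
    (s : Fin (n + 1) → EuclideanSpace ℝ (Fin n))
    (hs : AffineIndependent ℝ s)
    (S : Set (EuclideanSpace ℝ (Fin n)))
    (hS : S = convexHull ℝ (Set.range s))
    (hX₁S : X₁ ⊆ S) (hX₂S : X₂ ∩ S = ∅) :
    ∃ (W : EuclideanSpace ℝ (Fin (n + 1)) ≃ₗ[ℝ] EuclideanSpace ℝ (Fin (n + 1)))
      (b : EuclideanSpace ℝ (Fin (n + 1)))
      (u : EuclideanSpace ℝ (Fin (n + 1))) (c : ℝ),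
      (∀ x ∈ X₁, (inner ℝ u (truncE W b (incl n (n + 1) x)) : ℝ) < c) ∧
      (∀ x ∈ X₂, c < (inner ℝ u (truncE W b (incl n (n + 1) x)) : ℝ)) :=
  trunc_separates_simplex_data_general X₁ X₂ hX₂ s hs S hS hX₁S hX₂S
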